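/- arXiv:2303.05840 — 9 statements merged into one kernel-verified Lean document; each statement's English description precedes it below -/
import Mathlib

section
/- Let Z be a reflexive, separable real Banach space, let D, E ⊆ Z, and let (D_k)_{k∈ℕ}, (E_k)_{k∈ℕ} be sequences of subsets of Z such that D × E = Δ-lim_{k→∞} (D_k × E_k). Assume the equi-transversality condition: there are constants c > 0 and b ≥ 0, independent of k, such that ‖y − z‖_Z ≥ c(‖y‖_Z + ‖z‖_Z) − b for all k ∈ ℕ and all (y, z) ∈ D_k × E_k. If (y_k, z_k) ∈ Z × Z is a sequence with y_k ∈ D_k and z_k ∈ E_k for all sufficiently large k and ‖y_k − z_k‖_Z → 0, then there exists z ∈ D ∩ E and a strictly increasing sequence (k_j) such that y_{k_j} converges weakly to z, z_{k_j} converges weakly to z, and ‖y_{k_j} − z_{k_j}‖_Z → 0 (i.e., (z, z) = Δ-lim_{j→∞} (y_{k_j}, z_{k_j})). -/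
open Filter Topology

/-- Weak convergence of a sequence in a normed space: `f (y k) → f a` for every
continuous linear functional `f`. -/
def WeakConvergesTo {Z : Type*} [NormedAddCommGroup Z] [NormedSpace ℝ Z]
    (y : ℕ → Z) (a : Z) : Prop :=
  ∀ f : StrongDual ℝ Z, Tendsto (fun k => f (y k)) atTop (𝓝 (f a))

/-- Data convergence: `y_k ⇀ a`, `z_k ⇀ b`, and `y_k - z_k → a - b` strongly. -/
def DataConvergesTo {Z : Type*} [NormedAddCommGroup Z] [NormedSpace ℝ Z]
    (y z : ℕ → Z) (a b : Z) : Prop :=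
  WeakConvergesTo y a ∧ WeakConvergesTo z b ∧
    Tendsto (fun k => ‖(y k - z k) - (a - b)‖) atTop (𝓝 0)

/-- (DC1): every point of `D × E` is a data limit of a sequence of points of `D_k × E_k`. -/
def DC1 {Z : Type*} [NormedAddCommGroup Z] [NormedSpace ℝ Z]
    (D E : Set Z) (Dk Ek : ℕ → Set Z) : Prop :=
  ∀ a ∈ D, ∀ b ∈ E, ∃ y z : ℕ → Z,
    (∀ k, y k ∈ Dk k ∧ z k ∈ Ek k) ∧ DataConvergesTo y z a b

/-- (DC2): data limits of subsequences of points of `D_k × E_k` belong to `D × E`. -/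
def DC2 {Z : Type*} [NormedAddCommGroup Z] [NormedSpace ℝ Z]
    (D E : Set Z) (Dk Ek : ℕ → Set Z) : Prop :=
  ∀ kj : ℕ → ℕ, StrictMono kj → ∀ (y z : ℕ → Z) (a b : Z),
    (∀ j, y j ∈ Dk (kj j) ∧ z j ∈ Ek (kj j)) →
    DataConvergesTo y z a b → a ∈ D ∧ b ∈ E

/-! Transversality together with `‖y k - z k‖ → 0` bounds `y k` eventually. A separable reflexive
space has a separable dual (its bidual is separable, and a norming sequence for a dense sequence
of functionals spans a dense subspace), so the sequential Banach–Alaoglu theorem in the bidual,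
pulled back by reflexivity, gives a weakly convergent subsequence of `y`. Along it `z` has the same
weak limit, and (DC2) puts that limit in `D ∩ E`. -/

open NormedSpace TopologicalSpace

section SeparableDual

variable {X : Type*} [NormedAddCommGroup X] [NormedSpace ℝ X]

lemma StrongDual.exists_norm_le_one_half_norm_le_apply (g : StrongDual ℝ X) :
    ∃ x : X, ‖x‖ ≤ 1 ∧ ‖g‖ / 2 ≤ g x := by
  rcases eq_or_ne g 0 with rfl | hg
  · exact ⟨0, by simp, by simp⟩
  obtain ⟨x, hx1, hx2⟩ :=
    g.exists_lt_apply_of_lt_opNorm (half_lt_self (norm_pos_iff.mpr hg))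
  rcases le_or_gt 0 (g x) with hpos | hneg
  · exact ⟨x, hx1.le, by rw [Real.norm_eq_abs, abs_of_nonneg hpos] at hx2; exact hx2.le⟩
  · refine ⟨-x, by simpa using hx1.le, ?_⟩
    rw [Real.norm_eq_abs, abs_of_neg hneg] at hx2
    rw [map_neg]
    exact hx2.le

lemma StrongDual.eq_zero_of_forall_apply_eq_zero_of_denseRange {g : ℕ → StrongDual ℝ X}
    (hg : DenseRange g) {x : ℕ → X} (hx1 : ∀ n, ‖x n‖ ≤ 1) (hx2 : ∀ n, ‖g n‖ / 2 ≤ g n (x n))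
    {f : StrongDual ℝ X} (hf : ∀ n, f (x n) = 0) : f = 0 := by
  have hclose : ∀ n, ‖f‖ ≤ 3 * ‖f - g n‖ := by
    intro n
    have hgn : ‖g n‖ / 2 ≤ ‖f - g n‖ :=
      calc ‖g n‖ / 2 ≤ (g n - f) (x n) := by simpa [hf n] using hx2 n
        _ ≤ ‖g n - f‖ * ‖x n‖ := le_trans (le_abs_self _) ((g n - f).le_opNorm _)
        _ ≤ ‖f - g n‖ := by
          rw [norm_sub_rev]; exact mul_le_of_le_one_right (norm_nonneg _) (hx1 n)
    linarith [norm_le_norm_sub_add f (g n)]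
  refine norm_le_zero_iff.mp (le_of_forall_pos_le_add fun ε hε => ?_)
  obtain ⟨n, hn⟩ := hg.exists_dist_lt f (show 0 < ε / 3 by positivity)
  rw [dist_eq_norm] at hn
  linarith [hclose n]

lemma Submodule.dense_span_of_forall_strongDual_eq_zero {s : Set X}
    (h : ∀ f : StrongDual ℝ X, (∀ x ∈ s, f x = 0) → f = 0) :
    Dense (Submodule.span ℝ s : Set X) := by
  set S := Submodule.span ℝ s
  refine fun p => by_contra fun hp => ?_
  obtain ⟨f, u, hfu, hup⟩ :=
    geometric_hahn_banach_closed_point S.convex.closure isClosed_closure hp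
  -- `f` is bounded above on the subspace `S`, hence vanishes on it.
  have hfS : ∀ a ∈ S, f a = 0 := by
    intro a ha
    by_contra hfa
    have := hfu (((u + 1) / f a) • a) (subset_closure (S.smul_mem _ ha))
    rw [map_smul, smul_eq_mul, div_mul_cancel₀ _ hfa] at this
    linarith
  have hf : f = 0 := h f fun x hx => hfS x (Submodule.subset_span hx)
  have hu : 0 < u := by simpa using hfu 0 (subset_closure S.zero_mem)
  simp [hf] at hup
  linarith

theorem separableSpace_of_separableSpace_strongDual [SeparableSpace (StrongDual ℝ X)] :
    SeparableSpace X := by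
  have hg := denseRange_denseSeq (StrongDual ℝ X)
  choose x hx1 hx2 using fun n => (denseSeq (StrongDual ℝ X) n).exists_norm_le_one_half_norm_le_apply
  have hdense : Dense (Submodule.span ℝ (Set.range x) : Set X) :=
    Submodule.dense_span_of_forall_strongDual_eq_zero fun f hf =>
      StrongDual.eq_zero_of_forall_apply_eq_zero_of_denseRange hg hx1 hx2
        fun n => hf _ (Set.mem_range_self n)
  have : IsSeparable (Set.univ : Set X) := by
    rw [← hdense.closure_eq]
    exact (Set.countable_range x).isSeparable.span.closure
  exact isSeparable_univ_iff.mp this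

theorem separableSpace_strongDual_of_surjective_inclusionInDoubleDual [SeparableSpace X]
    (hrefl : Function.Surjective (inclusionInDoubleDual ℝ X)) :
    SeparableSpace (StrongDual ℝ X) :=
  have : SeparableSpace (StrongDual ℝ (StrongDual ℝ X)) :=
    hrefl.denseRange.separableSpace (inclusionInDoubleDual ℝ X).continuous
  separableSpace_of_separableSpace_strongDual

end SeparableDual

section WeakConvergence

variable {Z : Type*} [NormedAddCommGroup Z] [NormedSpace ℝ Z]

theorem exists_strictMono_weakConvergesTo_of_bounded [SeparableSpace (StrongDual ℝ Z)]
    (hrefl : Function.Surjective (inclusionInDoubleDual ℝ Z))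
    {x : ℕ → Z} {M : ℝ} (hM : ∀ k, ‖x k‖ ≤ M) :
    ∃ w, ∃ φ : ℕ → ℕ, StrictMono φ ∧ WeakConvergesTo (fun j => x (φ j)) w := by
  set X : ℕ → WeakDual ℝ (StrongDual ℝ Z) := fun k =>
    StrongDual.toWeakDual (inclusionInDoubleDual ℝ Z (x k))
  have hX : ∀ k, X k ∈ WeakDual.toStrongDual ⁻¹' Metric.closedBall 0 M := fun k => by
    rw [Set.mem_preimage, Metric.mem_closedBall]
    exact (dist_zero_right (inclusionInDoubleDual ℝ Z (x k))).trans_le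
      ((double_dual_bound ℝ Z (x k)).trans (hM k))
  obtain ⟨a, -, φ, hφ, hlim⟩ := WeakDual.isSeqCompact_closedBall ℝ _ 0 M hX
  obtain ⟨w, hw⟩ := hrefl (WeakDual.toStrongDual a)
  refine ⟨w, φ, hφ, fun f => ?_⟩
  convert tendsto_iff_forall_eval_tendsto_topDualPairing.mp hlim f using 2
  · rfl
  · exact congrArg (· f) hw

theorem WeakConvergesTo.of_tendsto_norm_sub {y z : ℕ → Z} {w : Z} (hy : WeakConvergesTo y w)
    (hyz : Tendsto (fun k => ‖y k - z k‖) atTop (𝓝 0)) : WeakConvergesTo z w := by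
  intro f
  have hf : Tendsto (fun k => f (y k) - f (z k)) atTop (𝓝 0) := by
    refine squeeze_zero_norm (fun k => ?_) (by simpa using hyz.const_mul ‖f‖)
    rw [← map_sub]
    exact f.le_opNorm _
  simpa using (hy f).sub hf

end WeakConvergence

theorem statement0_general {Z : Type*} [NormedAddCommGroup Z] [NormedSpace ℝ Z]
    [TopologicalSpace.SeparableSpace Z]
    (hrefl : Function.Surjective (NormedSpace.inclusionInDoubleDual ℝ Z))
    (D E : Set Z) (Dk Ek : ℕ → Set Z)
    (hDC2 : DC2 D E Dk Ek)
    (c b : ℝ) (hc : 0 < c)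
    (htrans : ∀ k, ∀ y ∈ Dk k, ∀ z ∈ Ek k, c * (‖y‖ + ‖z‖) - b ≤ ‖y - z‖)
    (y z : ℕ → Z)
    (hmem : ∀ᶠ k in atTop, y k ∈ Dk k ∧ z k ∈ Ek k)
    (hdiff : Tendsto (fun k => ‖y k - z k‖) atTop (𝓝 0)) :
    ∃ w, w ∈ D ∩ E ∧ ∃ kj : ℕ → ℕ, StrictMono kj ∧
      WeakConvergesTo (fun j => y (kj j)) w ∧
      WeakConvergesTo (fun j => z (kj j)) w ∧
      Tendsto (fun j => ‖y (kj j) - z (kj j)‖) atTop (𝓝 0) := by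
  have := separableSpace_strongDual_of_surjective_inclusionInDoubleDual hrefl
  obtain ⟨N, hN⟩ := eventually_atTop.mp (hmem.and (hdiff.eventually (ge_mem_nhds one_pos)))
  have hbound : ∀ j, ‖y (j + N)‖ ≤ (1 + b) / c := fun j => by
    obtain ⟨⟨hy, hz⟩, hsmall⟩ := hN (j + N) (Nat.le_add_left N j)
    have := htrans _ _ hy _ hz
    rw [le_div_iff₀ hc]
    nlinarith [norm_nonneg (z (j + N))]
  obtain ⟨w, φ, hφ, hyw⟩ := exists_strictMono_weakConvergesTo_of_bounded hrefl hbound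
  set kj : ℕ → ℕ := fun j => φ j + N
  have hkj : StrictMono kj := fun i j hij => Nat.add_lt_add_right (hφ hij) N
  have hd0 : Tendsto (fun j => ‖y (kj j) - z (kj j)‖) atTop (𝓝 0) :=
    hdiff.comp hkj.tendsto_atTop
  have hzw : WeakConvergesTo (fun j => z (kj j)) w := hyw.of_tendsto_norm_sub hd0
  obtain ⟨hwD, hwE⟩ := hDC2 kj hkj _ _ w w (fun j => (hN (kj j) (Nat.le_add_left N _)).1)
    ⟨hyw, hzw, by simpa using hd0⟩
  exact ⟨w, ⟨hwD, hwE⟩, kj, hkj, hyw, hzw, hd0⟩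

/-- In a reflexive separable Banach space, if `D × E` is the data limit of
`D_k × E_k`, equi-transversality holds, the sequence `(y_k, z_k)` eventually lies in
`D_k × E_k`, and `‖y_k - z_k‖ → 0`, then there is `z ∈ D ∩ E` which is the data limit of a
subsequence, i.e. `(z, z) = Δ-lim (y_{k_j}, z_{k_j})`. -/
theorem statement0 {Z : Type*} [NormedAddCommGroup Z] [NormedSpace ℝ Z] [CompleteSpace Z]
    [TopologicalSpace.SeparableSpace Z]
    (hrefl : Function.Surjective (NormedSpace.inclusionInDoubleDual ℝ Z))
    (D E : Set Z) (Dk Ek : ℕ → Set Z)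
    (hDC1 : DC1 D E Dk Ek) (hDC2 : DC2 D E Dk Ek)
    (c b : ℝ) (hc : 0 < c) (hb : 0 ≤ b)
    (htrans : ∀ k, ∀ y ∈ Dk k, ∀ z ∈ Ek k, c * (‖y‖ + ‖z‖) - b ≤ ‖y - z‖)
    (y z : ℕ → Z)
    (hmem : ∀ᶠ k in atTop, y k ∈ Dk k ∧ z k ∈ Ek k)
    (hdiff : Tendsto (fun k => ‖y k - z k‖) atTop (𝓝 0)) :
    ∃ w, w ∈ D ∩ E ∧ ∃ kj : ℕ → ℕ, StrictMono kj ∧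
      WeakConvergesTo (fun j => y (kj j)) w ∧
      WeakConvergesTo (fun j => z (kj j)) w ∧
      Tendsto (fun j => ‖y (kj j) - z (kj j)‖) atTop (𝓝 0) :=
  statement0_general hrefl D E Dk Ek hDC2 c b hc htrans y z hmem hdiff
end

section
/- Let Z be a real normed space and let D, E, D_k, E_k ⊆ Z (k ∈ ℕ) be subsets satisfying the fine approximation property: for each ξ ∈ D there is a sequence (ξ_k)_{k∈ℕ} with ξ_k ∈ D_k for all k and ‖ξ_k − ξ‖_Z → 0, and for each ζ ∈ E there is a sequence (ζ_k)_{k∈ℕ} with ζ_k ∈ E_k for all k and ‖ζ_k − ζ‖_Z → 0. Suppose (y, z) ∈ Z × Z is the data limit of some sequence (ŷ_n, ẑ_n) with (ŷ_n, ẑ_n) ∈ D × E for all n ∈ ℕ. Then there exists a sequence (y*_k, z*_k) with (y*_k, z*_k) ∈ D_k × E_k for all k ∈ ℕ such that (y, z) = Δ-lim_{k→∞} (y*_k, z*_k). -/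
open Filter Topology

/-!
Approximate each `ŷ n` and `ẑ n` by sequences `ξ n k ∈ D_k`, `ζ n k ∈ E_k`, and run along a
diagonal `k ↦ (φ k, k)` with `φ k → ∞` slowly enough that the approximation errors
`‖ξ (φ k) k - ŷ (φ k)‖`, `‖ζ (φ k) k - ẑ (φ k)‖` still tend to zero. Data convergence survives
passing to `ŷ ∘ φ`, `ẑ ∘ φ` and then perturbing both sequences by strongly null sequences.
-/

theorem exists_tendsto_atTop_tendsto_dist_diag {X : Type*} [PseudoMetricSpace X]
    {x : ℕ → ℕ → X} {a : ℕ → X} (h : ∀ n, Tendsto (x n) atTop (𝓝 (a n))) :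
    ∃ φ : ℕ → ℕ, Tendsto φ atTop atTop ∧
      Tendsto (fun k => dist (x (φ k) k) (a (φ k))) atTop (𝓝 0) := by
  classical
  set P : ℕ → ℕ → Prop := fun n k => dist (x n k) (a n) < 1 / (n + 1)
  have hP : ∀ n, ∀ᶠ k in atTop, P n k := fun n =>
    (h n).eventually (Metric.ball_mem_nhds _ Nat.one_div_pos_of_nat)
  set φ : ℕ → ℕ := fun k => Nat.findGreatest (P · k) k
  have hφ : Tendsto φ atTop atTop := tendsto_atTop.2 fun N =>
    ((hP N).and (eventually_ge_atTop N)).mono fun k hk => Nat.le_findGreatest hk.2 hk.1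
  refine ⟨φ, hφ, squeeze_zero' (Eventually.of_forall fun k => dist_nonneg) ?_
    (tendsto_one_div_add_atTop_nhds_zero_nat.comp hφ)⟩
  exact (hP 0).mono fun k hk => (Nat.findGreatest_spec (P := (P · k)) k.zero_le hk).le

section

variable {Z : Type*} [NormedAddCommGroup Z] [NormedSpace ℝ Z]

theorem WeakConvergesTo.comp_tendsto {y : ℕ → Z} {a : Z} (hy : WeakConvergesTo y a)
    {φ : ℕ → ℕ} (hφ : Tendsto φ atTop atTop) : WeakConvergesTo (y ∘ φ) a :=
  fun f => (hy f).comp hφ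

theorem WeakConvergesTo.of_tendsto_sub {y y' : ℕ → Z} {a : Z} (hy : WeakConvergesTo y a)
    (h : Tendsto (fun k => y' k - y k) atTop (𝓝 0)) : WeakConvergesTo y' a := by
  intro f
  have hf : Tendsto (fun k => f (y' k - y k)) atTop (𝓝 0) := by
    simpa only [map_zero, Function.comp_def] using (f.continuous.tendsto 0).comp h
  have hsum := (hy f).add hf
  simp only [map_sub, add_sub_cancel, add_zero] at hsum
  exact hsum

theorem DataConvergesTo.comp_tendsto {y z : ℕ → Z} {a b : Z} (h : DataConvergesTo y z a b)
    {φ : ℕ → ℕ} (hφ : Tendsto φ atTop atTop) : DataConvergesTo (y ∘ φ) (z ∘ φ) a b :=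
  ⟨h.1.comp_tendsto hφ, h.2.1.comp_tendsto hφ, h.2.2.comp hφ⟩

theorem DataConvergesTo.of_tendsto_sub {y z y' z' : ℕ → Z} {a b : Z}
    (h : DataConvergesTo y z a b) (hy : Tendsto (fun k => y' k - y k) atTop (𝓝 0))
    (hz : Tendsto (fun k => z' k - z k) atTop (𝓝 0)) : DataConvergesTo y' z' a b := by
  obtain ⟨hya, hzb, hyz⟩ := h
  refine ⟨hya.of_tendsto_sub hy, hzb.of_tendsto_sub hz, ?_⟩
  have hsplit : ∀ k, (y' k - z' k) - (a - b) =
      (y' k - y k) - (z' k - z k) + ((y k - z k) - (a - b)) := fun k => by abel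
  simp_rw [← tendsto_zero_iff_norm_tendsto_zero, hsplit] at hyz ⊢
  simpa using (hy.sub hz).add hyz

end

/-- Under the fine approximation property of `D_k` for `D` and of `E_k`
for `E`, any data limit `(y, z)` of a sequence in `D × E` is also the data limit of a
sequence of points of `D_k × E_k`. -/
theorem statement2 {Z : Type*} [NormedAddCommGroup Z] [NormedSpace ℝ Z]
    (D E : Set Z) (Dk Ek : ℕ → Set Z)
    (hfineD : ∀ ξ ∈ D, ∃ ξk : ℕ → Z, (∀ k, ξk k ∈ Dk k) ∧
        Tendsto (fun k => ‖ξk k - ξ‖) atTop (𝓝 0))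
    (hfineE : ∀ ζ ∈ E, ∃ ζk : ℕ → Z, (∀ k, ζk k ∈ Ek k) ∧
        Tendsto (fun k => ‖ζk k - ζ‖) atTop (𝓝 0))
    (y z : Z) (yh zh : ℕ → Z)
    (hseq : ∀ n, yh n ∈ D ∧ zh n ∈ E)
    (hlim : DataConvergesTo yh zh y z) :
    ∃ ys zs : ℕ → Z, (∀ k, ys k ∈ Dk k ∧ zs k ∈ Ek k) ∧
      DataConvergesTo ys zs y z := by
  choose ξ hξD hξ using fun n => hfineD (yh n) (hseq n).1
  choose ζ hζE hζ using fun n => hfineE (zh n) (hseq n).2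
  have happrox : ∀ n, Tendsto (fun k => (ξ n k, ζ n k)) atTop (𝓝 (yh n, zh n)) := fun n =>
    (tendsto_iff_norm_sub_tendsto_zero.2 (hξ n)).prodMk_nhds
      (tendsto_iff_norm_sub_tendsto_zero.2 (hζ n))
  obtain ⟨φ, hφ, hdiag⟩ := exists_tendsto_atTop_tendsto_dist_diag happrox
  have herr : Tendsto (fun k => (ξ (φ k) k - yh (φ k), ζ (φ k) k - zh (φ k))) atTop (𝓝 0) := by
    simpa [tendsto_zero_iff_norm_tendsto_zero, dist_eq_norm] using hdiag
  exact ⟨fun k => ξ (φ k) k, fun k => ζ (φ k) k, fun k => ⟨hξD _ k, hζE _ k⟩,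
    (hlim.comp_tendsto hφ).of_tendsto_sub herr.fst_nhds herr.snd_nhds⟩
end

section
/- Let Z be a real normed space and let D, E, D_k, E_k ⊆ Z (k ∈ ℕ). Assume the uniform approximation properties: there are sequences (t_k)_{k∈ℕ} and (r_k)_{k∈ℕ} of positive reals with t_k → 0 and r_k → 0 such that inf_{η∈D} ‖η − ξ‖_Z ≤ t_k for every ξ ∈ D_k and inf_{η∈E} ‖η − ζ‖_Z ≤ r_k for every ζ ∈ E_k. Assume further the data closure property: whenever a sequence (ŷ_j, ẑ_j) with (ŷ_j, ẑ_j) ∈ D × E for all j satisfies (y, z) = Δ-lim_{j→∞} (ŷ_j, ẑ_j), then y belongs to the norm closure of D and z ∈ E. Then for every strictly increasing sequence (k_j)_{j∈ℕ} in ℕ and every sequence (y_j, z_j) with (y_j, z_j) ∈ D_{k_j} × E_{k_j} for all j and (y, z) = Δ-lim_{j→∞} (y_j, z_j), it holds that y belongs to the norm closure of D and z ∈ E. -/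
open Filter Topology

/-! Replace each `y j ∈ D_{k_j}` and `z j ∈ E_{k_j}` by a point of `D`, resp. `E`, within
`t_{k_j} + 1/(j+1)`, resp. `r_{k_j} + 1/(j+1)`. These perturbations tend to zero in norm, which
preserves both weak limits and the strong limit of the differences, so the data closure
property applies to the perturbed sequence. -/

theorem exists_seq_mem_tendsto_norm_sub {X : Type*} [SeminormedAddCommGroup X] {s : Set X}
    {x : ℕ → X} {δ : ℕ → ℝ}
    (hδ : Tendsto δ atTop (𝓝 0)) (hx : ∀ j, ∀ ε > (0 : ℝ), ∃ η ∈ s, ‖η - x j‖ ≤ δ j + ε) :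
    ∃ x' : ℕ → X, (∀ j, x' j ∈ s) ∧ Tendsto (fun j => ‖x' j - x j‖) atTop (𝓝 0) := by
  choose x' hx's hx' using fun j => hx j (1 / ((j : ℝ) + 1)) Nat.one_div_pos_of_nat
  refine ⟨x', hx's, squeeze_zero (fun j => norm_nonneg _) hx' ?_⟩
  simpa using hδ.add tendsto_one_div_add_atTop_nhds_zero_nat

section

variable {Z : Type*} [NormedAddCommGroup Z] [NormedSpace ℝ Z]

theorem WeakConvergesTo.of_tendsto_norm_sub_s3 {y y' : ℕ → Z} {a : Z} (hy : WeakConvergesTo y a)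
    (h : Tendsto (fun j => ‖y' j - y j‖) atTop (𝓝 0)) : WeakConvergesTo y' a := by
  intro f
  have hf : Tendsto (fun j => f (y' j - y j)) atTop (𝓝 0) :=
    squeeze_zero_norm (fun j => f.le_opNorm _) (by simpa using h.const_mul ‖f‖)
  simpa using hf.add (hy f)

theorem DataConvergesTo.of_tendsto_norm_sub_s3 {y z y' z' : ℕ → Z} {a b : Z}
    (h : DataConvergesTo y z a b) (hy : Tendsto (fun j => ‖y' j - y j‖) atTop (𝓝 0))
    (hz : Tendsto (fun j => ‖z' j - z j‖) atTop (𝓝 0)) : DataConvergesTo y' z' a b := by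
  refine ⟨h.1.of_tendsto_norm_sub_s3 hy, h.2.1.of_tendsto_norm_sub_s3 hz, ?_⟩
  refine squeeze_zero (fun j => norm_nonneg _) (fun j => ?_)
    (by simpa using (h.2.2.add hy).add hz)
  calc ‖(y' j - z' j) - (a - b)‖
      = ‖((y j - z j) - (a - b)) + (y' j - y j) - (z' j - z j)‖ := by congr 1; abel
    _ ≤ ‖(y j - z j) - (a - b)‖ + ‖y' j - y j‖ + ‖z' j - z j‖ :=
        (norm_sub_le _ _).trans (by gcongr; exact norm_add_le _ _)

end

theorem statement3_general {Z : Type*} [NormedAddCommGroup Z] [NormedSpace ℝ Z]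
    (D E : Set Z) (Dk Ek : ℕ → Set Z)
    (t r : ℕ → ℝ)
    (ht : Tendsto t atTop (𝓝 0)) (hr : Tendsto r atTop (𝓝 0))
    (hunifD : ∀ k, ∀ ξ ∈ Dk k, ∀ ε > (0 : ℝ), ∃ η ∈ D, ‖η - ξ‖ ≤ t k + ε)
    (hunifE : ∀ k, ∀ ζ ∈ Ek k, ∀ ε > (0 : ℝ), ∃ η ∈ E, ‖η - ζ‖ ≤ r k + ε)
    (hclos : ∀ (yh zh : ℕ → Z) (y z : Z), (∀ j, yh j ∈ D ∧ zh j ∈ E) →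
        DataConvergesTo yh zh y z → y ∈ closure D ∧ z ∈ E)
    (kj : ℕ → ℕ) (hkj : StrictMono kj)
    (y z : ℕ → Z) (a b : Z)
    (hmem : ∀ j, y j ∈ Dk (kj j) ∧ z j ∈ Ek (kj j))
    (hlim : DataConvergesTo y z a b) :
    a ∈ closure D ∧ b ∈ E := by
  obtain ⟨y', hy'D, hy'⟩ := exists_seq_mem_tendsto_norm_sub (ht.comp hkj.tendsto_atTop)
    fun j => hunifD (kj j) (y j) (hmem j).1
  obtain ⟨z', hz'E, hz'⟩ := exists_seq_mem_tendsto_norm_sub (hr.comp hkj.tendsto_atTop)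
    fun j => hunifE (kj j) (z j) (hmem j).2
  exact hclos y' z' a b (fun j => ⟨hy'D j, hz'E j⟩) (hlim.of_tendsto_norm_sub_s3 hy' hz')

/-- Under uniform approximation of `D_k` by `D` (within `t_k → 0`) and of
`E_k` by `E` (within `r_k → 0`), and the data closure property of `D × E`, every data
limit of a subsequence of points of `D_k × E_k` has its first component in the norm
closure of `D` and its second component in `E`. -/
theorem statement3 {Z : Type*} [NormedAddCommGroup Z] [NormedSpace ℝ Z]
    (D E : Set Z) (Dk Ek : ℕ → Set Z)
    (t r : ℕ → ℝ) (htpos : ∀ k, 0 < t k) (hrpos : ∀ k, 0 < r k)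
    (ht : Tendsto t atTop (𝓝 0)) (hr : Tendsto r atTop (𝓝 0))
    (hunifD : ∀ k, ∀ ξ ∈ Dk k, ∀ ε > (0 : ℝ), ∃ η ∈ D, ‖η - ξ‖ ≤ t k + ε)
    (hunifE : ∀ k, ∀ ζ ∈ Ek k, ∀ ε > (0 : ℝ), ∃ η ∈ E, ‖η - ζ‖ ≤ r k + ε)
    (hclos : ∀ (yh zh : ℕ → Z) (y z : Z), (∀ j, yh j ∈ D ∧ zh j ∈ E) →
        DataConvergesTo yh zh y z → y ∈ closure D ∧ z ∈ E)
    (kj : ℕ → ℕ) (hkj : StrictMono kj)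
    (y z : ℕ → Z) (a b : Z)
    (hmem : ∀ j, y j ∈ Dk (kj j) ∧ z j ∈ Ek (kj j))
    (hlim : DataConvergesTo y z a b) :
    a ∈ closure D ∧ b ∈ E :=
  statement3_general D E Dk Ek t r ht hr hunifD hunifE hclos kj hkj y z a b hmem hlim
end

section
/- Let Z be a real normed space and let D, E, D_k, E_k ⊆ Z (k ∈ ℕ). Assume the transversality condition: there are constants c > 0 and b ≥ 0 such that ‖y − z‖_Z ≥ c(‖y‖_Z + ‖z‖_Z) − b for all y ∈ D and z ∈ E. Assume the uniform approximation properties: there are sequences of positive reals (t_k)_{k∈ℕ} and (r_k)_{k∈ℕ}, bounded above by constants T and R respectively, such that for every k ∈ ℕ, inf_{η∈D} ‖η − ξ‖_Z ≤ t_k for every ξ ∈ D_k and inf_{η∈E} ‖η − ζ‖_Z ≤ r_k for every ζ ∈ E_k. Then equi-transversality holds: for all k ∈ ℕ and all (y, z) ∈ D_k × E_k one has ‖y − z‖_Z ≥ c(‖y‖_Z + ‖z‖_Z) − b', with the constant b' := b + (1 + c)(T + R) independent of k. -/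
open Filter Topology

/-- Transversality of `D` and `E` together with uniform approximation of
`D_k` by `D` (within `t_k ≤ T`) and of `E_k` by `E` (within `r_k ≤ R`) implies
equi-transversality of `D_k` and `E_k` with the constant `b' = b + (1 + c)(T + R)`. -/
theorem statement4 {Z : Type*} [NormedAddCommGroup Z] [NormedSpace ℝ Z]
    (D E : Set Z) (Dk Ek : ℕ → Set Z)
    (c b : ℝ) (hc : 0 < c) (hb : 0 ≤ b)
    (htrans : ∀ y ∈ D, ∀ z ∈ E, c * (‖y‖ + ‖z‖) - b ≤ ‖y - z‖)
    (t r : ℕ → ℝ) (htpos : ∀ k, 0 < t k) (hrpos : ∀ k, 0 < r k)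
    (T R : ℝ) (htT : ∀ k, t k ≤ T) (hrR : ∀ k, r k ≤ R)
    (hunifD : ∀ k, ∀ ξ ∈ Dk k, ∀ ε > (0 : ℝ), ∃ η ∈ D, ‖η - ξ‖ ≤ t k + ε)
    (hunifE : ∀ k, ∀ ζ ∈ Ek k, ∀ ε > (0 : ℝ), ∃ η ∈ E, ‖η - ζ‖ ≤ r k + ε) :
    ∀ k, ∀ y ∈ Dk k, ∀ z ∈ Ek k,
      c * (‖y‖ + ‖z‖) - (b + (1 + c) * (T + R)) ≤ ‖y - z‖ := by
  intro k y hy z hz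
  apply le_of_forall_pos_le_add
  intro ε hε
  have hε2 : (0:ℝ) < ε / (2 * (1 + c)) := by positivity
  obtain ⟨η, hη, hηy⟩ := hunifD k y hy _ hε2
  obtain ⟨ζ, hζ, hζz⟩ := hunifE k z hz _ hε2
  have h1 := htrans η hη ζ hζ
  have hny : ‖y‖ ≤ ‖η‖ + ‖η - y‖ := by
    have := norm_sub_norm_le η y; linarith [abs_le.mp (abs_norm_sub_norm_le η y)]
  have hnz : ‖z‖ ≤ ‖ζ‖ + ‖ζ - z‖ := by
    have := abs_le.mp (abs_norm_sub_norm_le ζ z); linarith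
  have htri : ‖η - ζ‖ ≤ ‖η - y‖ + ‖y - z‖ + ‖ζ - z‖ := by
    have : η - ζ = (η - y) + (y - z) - (ζ - z) := by abel
    rw [this]
    calc ‖(η - y) + (y - z) - (ζ - z)‖ ≤ ‖(η - y) + (y - z)‖ + ‖ζ - z‖ := norm_sub_le _ _
      _ ≤ ‖η - y‖ + ‖y - z‖ + ‖ζ - z‖ := by linarith [norm_add_le (η - y) (y - z)]
  have htk : t k ≤ T := htT k
  have hrk : r k ≤ R := hrR k
  have hcT : 0 < t k := htpos k
  have hcR : 0 < r k := hrpos k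
  have key : ε / (2 * (1 + c)) * (1 + c) = ε / 2 := by field_simp
  nlinarith [mul_le_mul_of_nonneg_left hny hc.le, mul_le_mul_of_nonneg_left hnz hc.le,
    mul_pos hc hε2]
end

section
/- Let Z be a real normed space and let D, E, D_k, E_k ⊆ Z (k ∈ ℕ). Write cl(D) for the norm closure of D. Assume: (i) (data closure) a pair (y, z) ∈ Z × Z is the data limit of some sequence in D × E if and only if y ∈ cl(D) and z ∈ E; (ii) (fine approximation) for each ξ ∈ D there is a sequence ξ_k ∈ D_k with ‖ξ_k − ξ‖_Z → 0, and for each ζ ∈ E there is a sequence ζ_k ∈ E_k with ‖ζ_k − ζ‖_Z → 0; (iii) (uniform approximation) there are sequences of positive reals t_k → 0 and r_k → 0 such that inf_{η∈D} ‖η − ξ‖_Z ≤ t_k for every ξ ∈ D_k and inf_{η∈E} ‖η − ζ‖_Z ≤ r_k for every ζ ∈ E_k. Then cl(D) × E = Δ-lim_{k→∞} (D_k × E_k), i.e., both (DC1) and (DC2) hold with limit set cl(D) × E. -/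
open Filter Topology

open Metric

/-!
Weak convergence is stable under perturbations tending to zero in norm, hence so is data
convergence. For (DC1), the fine approximation of `D` forces `infDist a D_k → 0` for every
`a ∈ cl(D)`, so `a` is a norm limit of points of `D_k`, and norm convergence of both components
implies data convergence. For (DC2), uniform approximation moves points of `D_{k_j} × E_{k_j}`
into `D × E` by such perturbations without changing the data limit, and data closure then puts
the limit in `cl(D) × E`.
-/

section PseudoMetric

variable {α : Type*} [PseudoMetricSpace α] {D : Set α} {Dk : ℕ → Set α} {a : α}

theorem tendsto_infDist_of_mem_closure
    (hfine : ∀ ξ ∈ D, ∃ ξk : ℕ → α, (∀ k, ξk k ∈ Dk k) ∧ Tendsto ξk atTop (𝓝 ξ))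
    (ha : a ∈ closure D) : Tendsto (fun k => infDist a (Dk k)) atTop (𝓝 0) := by
  rw [Metric.tendsto_nhds]
  intro ε hε
  obtain ⟨d, hdD, had⟩ := Metric.mem_closure_iff.1 ha (ε / 2) (half_pos hε)
  obtain ⟨ξk, hξkD, hξk⟩ := hfine d hdD
  filter_upwards [Metric.tendsto_nhds.1 hξk (ε / 2) (half_pos hε)] with k hk
  rw [Real.dist_0_eq_abs, abs_of_nonneg infDist_nonneg]
  calc infDist a (Dk k) ≤ dist a (ξk k) := infDist_le_dist_of_mem (hξkD k)
    _ ≤ dist a d + dist (ξk k) d := dist_triangle_right _ _ _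
    _ < ε := by linarith

theorem exists_tendsto_of_tendsto_infDist (hne : ∀ k, (Dk k).Nonempty)
    (h : Tendsto (fun k => infDist a (Dk k)) atTop (𝓝 0)) :
    ∃ y : ℕ → α, (∀ k, y k ∈ Dk k) ∧ Tendsto y atTop (𝓝 a) := by
  have hnear : ∀ k : ℕ, ∃ p ∈ Dk k, dist a p < infDist a (Dk k) + 1 / (k + 1) := fun k =>
    (infDist_lt_iff (hne k)).1 (lt_add_of_pos_right _ Nat.one_div_pos_of_nat)
  choose y hyD hy using hnear
  refine ⟨y, hyD, tendsto_iff_dist_tendsto_zero.2 ?_⟩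
  have hbound : Tendsto (fun k : ℕ => infDist a (Dk k) + 1 / (k + 1)) atTop (𝓝 0) := by
    simpa using h.add tendsto_one_div_add_atTop_nhds_zero_nat
  exact squeeze_zero (fun _ => dist_nonneg) (fun k => (dist_comm (y k) a).trans_le (hy k).le)
    hbound

theorem exists_tendsto_of_mem_closure
    (hfine : ∀ ξ ∈ D, ∃ ξk : ℕ → α, (∀ k, ξk k ∈ Dk k) ∧ Tendsto ξk atTop (𝓝 ξ))
    (ha : a ∈ closure D) : ∃ y : ℕ → α, (∀ k, y k ∈ Dk k) ∧ Tendsto y atTop (𝓝 a) := by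
  obtain ⟨d, hdD⟩ := closure_nonempty_iff.1 ⟨a, ha⟩
  obtain ⟨ξk, hξkD, -⟩ := hfine d hdD
  exact exists_tendsto_of_tendsto_infDist (fun k => ⟨ξk k, hξkD k⟩)
    (tendsto_infDist_of_mem_closure hfine ha)

end PseudoMetric

theorem exists_seq_mem_tendsto_sub_zero {E : Type*} [SeminormedAddCommGroup E] {D : Set E}
    {s : ℕ → Set E} {δ : ℕ → ℝ} (hδ : Tendsto δ atTop (𝓝 0))
    (hs : ∀ j, ∀ ξ ∈ s j, ∀ ε > (0 : ℝ), ∃ η ∈ D, ‖η - ξ‖ ≤ δ j + ε)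
    {y : ℕ → E} (hy : ∀ j, y j ∈ s j) :
    ∃ y' : ℕ → E, (∀ j, y' j ∈ D) ∧ Tendsto (fun j => y' j - y j) atTop (𝓝 0) := by
  choose y' hy'D hy' using fun j : ℕ => hs j (y j) (hy j) (1 / (j + 1)) Nat.one_div_pos_of_nat
  refine ⟨y', hy'D, tendsto_zero_iff_norm_tendsto_zero.2 ?_⟩
  have hbound : Tendsto (fun j : ℕ => δ j + 1 / (j + 1)) atTop (𝓝 0) := by
    simpa using hδ.add tendsto_one_div_add_atTop_nhds_zero_nat
  exact squeeze_zero (fun _ => norm_nonneg _) hy' hbound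

section Normed

variable {Z : Type*} [NormedAddCommGroup Z] [NormedSpace ℝ Z] {y y' z z' : ℕ → Z} {a b : Z}

theorem WeakConvergesTo.of_tendsto (h : Tendsto y atTop (𝓝 a)) : WeakConvergesTo y a :=
  fun f => (f.continuous.tendsto a).comp h

theorem WeakConvergesTo.congr_sub (hy : WeakConvergesTo y a)
    (h : Tendsto (fun k => y' k - y k) atTop (𝓝 0)) : WeakConvergesTo y' a := fun f => by
  simpa using (hy f).add ((f.continuous.tendsto 0).comp h)

theorem dataConvergesTo_iff : DataConvergesTo y z a b ↔
    WeakConvergesTo y a ∧ WeakConvergesTo z b ∧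
      Tendsto (fun k => y k - z k) atTop (𝓝 (a - b)) := by
  rw [DataConvergesTo, ← tendsto_iff_norm_sub_tendsto_zero]

theorem DataConvergesTo.of_tendsto (hy : Tendsto y atTop (𝓝 a)) (hz : Tendsto z atTop (𝓝 b)) :
    DataConvergesTo y z a b :=
  dataConvergesTo_iff.2 ⟨.of_tendsto hy, .of_tendsto hz, hy.sub hz⟩

theorem DataConvergesTo.congr_sub (h : DataConvergesTo y z a b)
    (hy : Tendsto (fun k => y' k - y k) atTop (𝓝 0))
    (hz : Tendsto (fun k => z' k - z k) atTop (𝓝 0)) : DataConvergesTo y' z' a b := by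
  obtain ⟨hwy, hwz, hyz⟩ := dataConvergesTo_iff.1 h
  refine dataConvergesTo_iff.2 ⟨hwy.congr_sub hy, hwz.congr_sub hz, ?_⟩
  convert hyz.add (hy.sub hz) using 1
  · ext k
    abel
  · simp

end Normed

theorem statement5_general {Z : Type*} [NormedAddCommGroup Z] [NormedSpace ℝ Z]
    (D E : Set Z) (Dk Ek : ℕ → Set Z)
    (hclos : ∀ y z : Z,
      (∃ yh zh : ℕ → Z, (∀ n, yh n ∈ D ∧ zh n ∈ E) ∧ DataConvergesTo yh zh y z) ↔
        (y ∈ closure D ∧ z ∈ E))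
    (hfineD : ∀ ξ ∈ D, ∃ ξk : ℕ → Z, (∀ k, ξk k ∈ Dk k) ∧
        Tendsto (fun k => ‖ξk k - ξ‖) atTop (𝓝 0))
    (hfineE : ∀ ζ ∈ E, ∃ ζk : ℕ → Z, (∀ k, ζk k ∈ Ek k) ∧
        Tendsto (fun k => ‖ζk k - ζ‖) atTop (𝓝 0))
    (t r : ℕ → ℝ)
    (ht : Tendsto t atTop (𝓝 0)) (hr : Tendsto r atTop (𝓝 0))
    (hunifD : ∀ k, ∀ ξ ∈ Dk k, ∀ ε > (0 : ℝ), ∃ η ∈ D, ‖η - ξ‖ ≤ t k + ε)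
    (hunifE : ∀ k, ∀ ζ ∈ Ek k, ∀ ε > (0 : ℝ), ∃ η ∈ E, ‖η - ζ‖ ≤ r k + ε) :
    DC1 (closure D) E Dk Ek ∧ DC2 (closure D) E Dk Ek := by
  constructor
  · intro a ha b hb
    obtain ⟨y, hyD, hy⟩ := exists_tendsto_of_mem_closure
      (fun ξ hξ => (hfineD ξ hξ).imp fun _ => And.imp_right tendsto_iff_norm_sub_tendsto_zero.2)
      ha
    obtain ⟨z, hzE, hz⟩ := hfineE b hb
    exact ⟨y, z, fun k => ⟨hyD k, hzE k⟩,
      .of_tendsto hy (tendsto_iff_norm_sub_tendsto_zero.2 hz)⟩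
  · intro kj hkj y z a b hmem hyz
    obtain ⟨y', hy'D, hy'⟩ := exists_seq_mem_tendsto_sub_zero (ht.comp hkj.tendsto_atTop)
      (fun j => hunifD (kj j)) (fun j => (hmem j).1)
    obtain ⟨z', hz'E, hz'⟩ := exists_seq_mem_tendsto_sub_zero (hr.comp hkj.tendsto_atTop)
      (fun j => hunifE (kj j)) (fun j => (hmem j).2)
    exact (hclos a b).1 ⟨y', z', fun j => ⟨hy'D j, hz'E j⟩, hyz.congr_sub hy' hz'⟩

/-- If (i) a pair `(y, z)` is the data limit of a sequence in `D × E` iff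
`y ∈ cl(D)` and `z ∈ E` (data closure), (ii) `D_k` finely approximates `D` and `E_k`
finely approximates `E`, and (iii) `D_k` is uniformly approximated by `D` within
`t_k → 0` and `E_k` by `E` within `r_k → 0`, then
`cl(D) × E = Δ-lim (D_k × E_k)`, i.e. (DC1) and (DC2) hold with limit set `cl(D) × E`. -/
theorem statement5 {Z : Type*} [NormedAddCommGroup Z] [NormedSpace ℝ Z]
    (D E : Set Z) (Dk Ek : ℕ → Set Z)
    (hclos : ∀ y z : Z,
      (∃ yh zh : ℕ → Z, (∀ n, yh n ∈ D ∧ zh n ∈ E) ∧ DataConvergesTo yh zh y z) ↔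
        (y ∈ closure D ∧ z ∈ E))
    (hfineD : ∀ ξ ∈ D, ∃ ξk : ℕ → Z, (∀ k, ξk k ∈ Dk k) ∧
        Tendsto (fun k => ‖ξk k - ξ‖) atTop (𝓝 0))
    (hfineE : ∀ ζ ∈ E, ∃ ζk : ℕ → Z, (∀ k, ζk k ∈ Ek k) ∧
        Tendsto (fun k => ‖ζk k - ζ‖) atTop (𝓝 0))
    (t r : ℕ → ℝ) (htpos : ∀ k, 0 < t k) (hrpos : ∀ k, 0 < r k)
    (ht : Tendsto t atTop (𝓝 0)) (hr : Tendsto r atTop (𝓝 0))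
    (hunifD : ∀ k, ∀ ξ ∈ Dk k, ∀ ε > (0 : ℝ), ∃ η ∈ D, ‖η - ξ‖ ≤ t k + ε)
    (hunifE : ∀ k, ∀ ζ ∈ Ek k, ∀ ε > (0 : ℝ), ∃ η ∈ E, ‖η - ζ‖ ≤ r k + ε) :
    DC1 (closure D) E Dk Ek ∧ DC2 (closure D) E Dk Ek :=
  statement5_general D E Dk Ek hclos hfineD hfineE t r ht hr hunifD hunifE
end

section
/- Let (Ω, μ) be a finite measure space, let m ∈ ℕ, and let D^loc ⊆ ℝ^m be nonempty. Define D := { y ∈ L²(μ; ℝ^m) : y(x) ∈ D^loc for μ-a.e. x ∈ Ω }. Let (D_k^loc)_{k∈ℕ} be a sequence of nonempty subsets of ℝ^m and let (ρ_k)_{k∈ℕ} be a sequence of positive reals with ρ_k → 0 such that sup_{ξ∈D^loc} inf_{η∈D_k^loc} |ξ − η| ≤ ρ_k for all k. Then for every y ∈ D there exists a sequence (y_k)_{k∈ℕ} of simple (finitely-valued measurable) functions y_k ∈ L²(μ; ℝ^m) with y_k(x) ∈ D_k^loc for μ-a.e. x ∈ Ω, such that ‖y_k − y‖_{L²(μ;ℝ^m)}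 → 0 as k → ∞. -/
/-!
Choose a representative of `y` with values everywhere in `D^loc` and approximate it in `L²` by
the standard simple functions `SimpleFunc.approxOn`, whose values stay in `D^loc`. Post-composing
them with a choice of a point of `D_k^loc` within `2ρ_k` of each point of `D^loc` (the infimum
need not be attained, hence the factor 2) moves them by at most `2ρ_k` uniformly, which on a
finite measure space costs at most `μ(Ω)^{1/2} · 2ρ_k → 0` in `L²`.
-/

open Filter Topology MeasureTheory ENNReal

section SimpleApproximation

variable {Ω E : Type*} [MeasurableSpace Ω] {μ : Measure Ω} [IsFiniteMeasure μ]
  [NormedAddCommGroup E]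

theorem tendsto_eLpNorm_sub_of_dist_le {ι : Type*} {l : Filter ι}
    {f g : ι → Ω → E} {ε : ι → ℝ} (p : ℝ≥0∞) (hε : Tendsto ε l (𝓝 0))
    (hfg : ∀ k x, dist (f k x) (g k x) ≤ ε k) :
    Tendsto (fun k => eLpNorm (f k - g k) p μ) l (𝓝 0) := by
  have hbound : ∀ k, eLpNorm (f k - g k) p μ ≤ μ Set.univ ^ p.toReal⁻¹ * ENNReal.ofReal (ε k) :=
    fun k => eLpNorm_le_of_ae_bound <| Eventually.of_forall fun x => by
      simpa only [Pi.sub_apply, ← dist_eq_norm] using hfg k x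
  have hbound_lim : Tendsto (fun k => μ Set.univ ^ p.toReal⁻¹ * ENNReal.ofReal (ε k)) l (𝓝 0) := by
    have hμ : μ Set.univ ^ p.toReal⁻¹ ≠ ∞ :=
      ENNReal.rpow_ne_top_of_nonneg (inv_nonneg.2 ENNReal.toReal_nonneg) (measure_ne_top μ _)
    simpa using ENNReal.Tendsto.const_mul (ENNReal.tendsto_ofReal hε) (Or.inr hμ)
  exact tendsto_of_tendsto_of_tendsto_of_le_of_le tendsto_const_nhds hbound_lim
    (fun _ => zero_le) hbound

theorem exists_simpleFunc_forall_mem_tendsto_eLpNorm [MeasurableSpace E] [BorelSpace E]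
    [SecondCountableTopology E] {p : ℝ≥0∞} [Fact (1 ≤ p)] (hp : p ≠ ∞)
    {s : Set E} (hs : s.Nonempty) {t : ℕ → Set E} {ε : ℕ → ℝ} (hε : Tendsto ε atTop (𝓝 0))
    (hst : ∀ k, ∀ ξ ∈ s, ∃ η ∈ t k, dist ξ η ≤ ε k) {g : Ω → E} (hg : MemLp g p μ)
    (hgs : ∀ᵐ x ∂μ, g x ∈ s) :
    ∃ f : ℕ → SimpleFunc Ω E, (∀ k x, f k x ∈ t k) ∧
      Tendsto (fun k => eLpNorm (⇑(f k) - g) p μ) atTop (𝓝 0) := by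
  obtain ⟨g', hg'_meas, hg'_range, hgg'⟩ :=
    hg.aestronglyMeasurable.aemeasurable.exists_ae_eq_range_subset hgs hs
  obtain ⟨ξ₀, hξ₀⟩ := hs
  set T : ℕ → SimpleFunc Ω E := fun k => SimpleFunc.approxOn g' hg'_meas s ξ₀ hξ₀ k
  have hT : Tendsto (fun k => eLpNorm (⇑(T k) - g') p μ) atTop (𝓝 0) :=
    SimpleFunc.tendsto_approxOn_Lp_eLpNorm hg'_meas hξ₀ hp
      (Eventually.of_forall fun x => subset_closure (hg'_range ⟨x, rfl⟩))
      ((hg.ae_eq hgg').sub (memLp_const ξ₀)).2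
  have hproj : ∀ k ξ, ∃ η ∈ t k, ξ ∈ s → dist ξ η ≤ ε k := fun k ξ => by
    by_cases hξ : ξ ∈ s
    · obtain ⟨η, hη, hdist⟩ := hst k ξ hξ
      exact ⟨η, hη, fun _ => hdist⟩
    · obtain ⟨η, hη, -⟩ := hst k ξ₀ hξ₀
      exact ⟨η, hη, fun h => absurd h hξ⟩
  choose π hπ_mem hπ_dist using hproj
  refine ⟨fun k => (T k).map (π k), fun k x => hπ_mem k _, ?_⟩
  have hclose : Tendsto (fun k => eLpNorm (⇑((T k).map (π k)) - ⇑(T k)) p μ) atTop (𝓝 0) :=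
    tendsto_eLpNorm_sub_of_dist_le p hε fun k x => by
      rw [dist_comm]
      exact hπ_dist k _ (SimpleFunc.approxOn_mem hg'_meas hξ₀ k x)
  have htriangle : ∀ k, eLpNorm (⇑((T k).map (π k)) - g) p μ ≤
      eLpNorm (⇑((T k).map (π k)) - ⇑(T k)) p μ + eLpNorm (⇑(T k) - g') p μ := fun k =>
    calc eLpNorm (⇑((T k).map (π k)) - g) p μ
        = eLpNorm ((⇑((T k).map (π k)) - ⇑(T k)) + (⇑(T k) - g')) p μ :=
          eLpNorm_congr_ae <| hgg'.mono fun x hx => by simp [hx]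
      _ ≤ _ := eLpNorm_add_le (by fun_prop) (by fun_prop) Fact.out
  exact tendsto_of_tendsto_of_tendsto_of_le_of_le tendsto_const_nhds
    (by simpa using hclose.add hT) (fun _ => zero_le) htriangle

end SimpleApproximation

/-- fine approximation of the material data set: if the local data sets
`D_k^loc` approximate the nonempty set `D^loc ⊆ ℝ^m` in the sense that
`sup_{ξ ∈ D^loc} inf_{η ∈ D_k^loc} |ξ - η| ≤ ρ_k` with `ρ_k → 0`, then every
`y ∈ L²(μ; ℝ^m)` with values a.e. in `D^loc` is the `L²`-limit of simple functions
with values a.e. in `D_k^loc`. -/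
theorem statement6 {Ω : Type*} [MeasurableSpace Ω] (μ : Measure Ω) [IsFiniteMeasure μ]
    (m : ℕ) (Dloc : Set (EuclideanSpace ℝ (Fin m))) (hDloc : Dloc.Nonempty)
    (Dkloc : ℕ → Set (EuclideanSpace ℝ (Fin m))) (hDk : ∀ k, (Dkloc k).Nonempty)
    (ρ : ℕ → ℝ) (hρpos : ∀ k, 0 < ρ k) (hρ : Tendsto ρ atTop (𝓝 0))
    (hH : ∀ k, ∀ ξ ∈ Dloc, Metric.infDist ξ (Dkloc k) ≤ ρ k)
    (y : Lp (EuclideanSpace ℝ (Fin m)) 2 μ)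
    (hy : ∀ᵐ x ∂μ, y x ∈ Dloc) :
    ∃ (s : ℕ → SimpleFunc Ω (EuclideanSpace ℝ (Fin m)))
      (hs : ∀ k, MemLp (s k) 2 μ),
      (∀ k, ∀ᵐ x ∂μ, s k x ∈ Dkloc k) ∧
      Tendsto (fun k => ‖(hs k).toLp (s k) - y‖) atTop (𝓝 0) := by
  have hnear : ∀ k, ∀ ξ ∈ Dloc, ∃ η ∈ Dkloc k, dist ξ η ≤ 2 * ρ k := fun k ξ hξ => by
    obtain ⟨η, hη, hdist⟩ := (Metric.infDist_lt_iff (hDk k)).1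
      ((hH k ξ hξ).trans_lt (lt_two_mul_self (hρpos k)))
    exact ⟨η, hη, hdist.le⟩
  obtain ⟨s, hs_mem, hs_lim⟩ := exists_simpleFunc_forall_mem_tendsto_eLpNorm ofNat_ne_top hDloc
    (by simpa using hρ.const_mul 2) hnear (Lp.memLp y) hy
  have hs : ∀ k, MemLp (s k) 2 μ := fun k => (s k).memLp_of_isFiniteMeasure 2 μ
  refine ⟨s, hs, fun k => Eventually.of_forall (hs_mem k), ?_⟩
  have hs_tendsto := (Lp.tendsto_Lp_iff_tendsto_eLpNorm'' _ hs _ (Lp.memLp y)).2 hs_lim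
  rw [Lp.toLp_coeFn] at hs_tendsto
  exact tendsto_iff_norm_sub_tendsto_zero.1 hs_tendsto
end

section
/- Let (Ω, μ) be a finite measure space, let m ∈ ℕ, and let D^loc ⊆ ℝ^m be nonempty. Define D := { y ∈ L²(μ; ℝ^m) : y(x) ∈ D^loc for μ-a.e. x ∈ Ω }. Let D_k^loc ⊆ ℝ^m be nonempty and let ρ > 0 satisfy sup_{η∈D_k^loc} inf_{ξ∈D^loc} |η − ξ| ≤ ρ. Then every simple (finitely-valued measurable) function y_k ∈ L²(μ; ℝ^m) with y_k(x) ∈ D_k^loc for μ-a.e. x ∈ Ω satisfies inf_{y∈D} ‖y_k − y‖_{L²(μ;ℝ^m)} ≤ √(μ(Ω)) · ρ. -/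
open Filter Topology MeasureTheory

/-! Move each value of `y_k` to a point of `D^loc` at distance less than `ρ + ε`. The result is
again a simple function, lies in `D`, and differs from `y_k` pointwise by at most `ρ + ε`, hence
by at most `√(μ(Ω)) (ρ + ε)` in `L²`. Let `ε → 0`. -/

theorem Metric.exists_forall_mem_dist_lt_infDist_add {E : Type*} [PseudoMetricSpace E]
    {D : Set E} (hD : D.Nonempty) {ε : ℝ} (hε : 0 < ε) :
    ∃ g : E → E, ∀ η, g η ∈ D ∧ dist η (g η) < Metric.infDist η D + ε := by
  have h η : ∃ ξ ∈ D, dist η ξ < Metric.infDist η D + ε :=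
    (Metric.infDist_lt_iff hD).mp (lt_add_of_pos_right _ hε)
  choose g hgD hg using h
  exact ⟨g, fun η => ⟨hgD η, hg η⟩⟩

namespace MeasureTheory

variable {α E : Type*} [MeasurableSpace α] {μ : Measure α} [IsFiniteMeasure μ]
  [NormedAddCommGroup E] {p : ENNReal} [Fact (1 ≤ p)]

theorem MemLp.dist_toLp_le_of_ae_dist_le {f g : α → E} (hf : MemLp f p μ) (hg : MemLp g p μ)
    {C : ℝ} (hC : 0 ≤ C) (hfg : ∀ᵐ x ∂μ, dist (f x) (g x) ≤ C) :
    dist (hf.toLp f) (hg.toLp g) ≤ measureUnivNNReal μ ^ p.toReal⁻¹ * C := by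
  rw [dist_eq_norm, ← hf.toLp_sub hg]
  refine Lp.norm_le_of_ae_bound hC ?_
  filter_upwards [(hf.sub hg).coeFn_toLp, hfg] with x hx hxC
  rwa [hx, Pi.sub_apply, ← dist_eq_norm]

theorem SimpleFunc.infDist_toLp_le_of_ae_infDist_le (f : SimpleFunc α E) (hf : MemLp f p μ)
    {D : Set E} (hD : D.Nonempty) {ρ : ℝ} (hρ : 0 ≤ ρ)
    (hfD : ∀ᵐ x ∂μ, Metric.infDist (f x) D ≤ ρ) :
    Metric.infDist (hf.toLp f) {y : Lp E p μ | ∀ᵐ x ∂μ, y x ∈ D}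
      ≤ measureUnivNNReal μ ^ p.toReal⁻¹ * ρ := by
  set c : ℝ := measureUnivNNReal μ ^ p.toReal⁻¹
  have hε : ∀ ε > 0, Metric.infDist (hf.toLp f) {y : Lp E p μ | ∀ᵐ x ∂μ, y x ∈ D}
      ≤ c * (ρ + ε) := by
    intro ε hε
    obtain ⟨g, hg⟩ := Metric.exists_forall_mem_dist_lt_infDist_add hD hε
    -- Composing with `g` keeps `f` simple, hence in `Lp`, and moves every value into `D`.
    have hgf : MemLp (f.map g) p μ := (f.map g).memLp_of_isFiniteMeasure p μ
    have hgfD : hgf.toLp (f.map g) ∈ {y : Lp E p μ | ∀ᵐ x ∂μ, y x ∈ D} := by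
      filter_upwards [hgf.coeFn_toLp] with x hx
      rw [hx]
      exact (hg _).1
    refine (Metric.infDist_le_dist_of_mem hgfD).trans
      (hf.dist_toLp_le_of_ae_dist_le hgf (by positivity) ?_)
    filter_upwards [hfD] with x hx
    exact ((hg (f x)).2.trans_le (by linarith)).le
  have hlim : Tendsto (fun ε => c * (ρ + ε)) (𝓝[>] 0) (𝓝 (c * ρ)) := by
    refine tendsto_nhdsWithin_of_tendsto_nhds ?_
    simpa using ((continuous_const.add continuous_id).const_mul c).tendsto (0 : ℝ)
  exact ge_of_tendsto hlim (eventually_nhdsWithin_of_forall hε)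

end MeasureTheory

theorem statement7_general {Ω : Type*} [MeasurableSpace Ω] (μ : Measure Ω) [IsFiniteMeasure μ]
    (m : ℕ) (Dloc : Set (EuclideanSpace ℝ (Fin m))) (hDloc : Dloc.Nonempty)
    (Dkloc : Set (EuclideanSpace ℝ (Fin m)))
    (ρ : ℝ) (hρ : 0 < ρ)
    (hH : ∀ η ∈ Dkloc, Metric.infDist η Dloc ≤ ρ)
    (yk : SimpleFunc Ω (EuclideanSpace ℝ (Fin m)))
    (hmem : MemLp (yk : Ω → EuclideanSpace ℝ (Fin m)) 2 μ)
    (hval : ∀ᵐ x ∂μ, yk x ∈ Dkloc) :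
    Metric.infDist (hmem.toLp yk)
      {y : Lp (EuclideanSpace ℝ (Fin m)) 2 μ | ∀ᵐ x ∂μ, y x ∈ Dloc}
      ≤ Real.sqrt (μ Set.univ).toReal * ρ := by
  have hsqrt : ((measureUnivNNReal μ ^ (2 : ENNReal).toReal⁻¹ : NNReal) : ℝ)
      = Real.sqrt (μ Set.univ).toReal := by
    simp [Real.sqrt_eq_rpow, measureUnivNNReal, NNReal.coe_rpow, ENNReal.coe_toNNReal_eq_toReal]
  rw [← hsqrt]
  exact yk.infDist_toLp_le_of_ae_infDist_le hmem hDloc hρ.le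
    (hval.mono fun x hx => hH _ hx)

/-- uniform approximation of the material data set: if
`sup_{η ∈ D_k^loc} inf_{ξ ∈ D^loc} |η - ξ| ≤ ρ`, then every simple function in
`L²(μ; ℝ^m)` with values a.e. in `D_k^loc` has distance at most `√(μ(Ω)) · ρ` to the set
`D = {y ∈ L² : y(x) ∈ D^loc a.e.}`. -/
theorem statement7 {Ω : Type*} [MeasurableSpace Ω] (μ : Measure Ω) [IsFiniteMeasure μ]
    (m : ℕ) (Dloc : Set (EuclideanSpace ℝ (Fin m))) (hDloc : Dloc.Nonempty)
    (Dkloc : Set (EuclideanSpace ℝ (Fin m))) (hDk : Dkloc.Nonempty)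
    (ρ : ℝ) (hρ : 0 < ρ)
    (hH : ∀ η ∈ Dkloc, Metric.infDist η Dloc ≤ ρ)
    (yk : SimpleFunc Ω (EuclideanSpace ℝ (Fin m)))
    (hmem : MemLp (yk : Ω → EuclideanSpace ℝ (Fin m)) 2 μ)
    (hval : ∀ᵐ x ∂μ, yk x ∈ Dkloc) :
    Metric.infDist (hmem.toLp yk)
      {y : Lp (EuclideanSpace ℝ (Fin m)) 2 μ | ∀ᵐ x ∂μ, y x ∈ Dloc}
      ≤ Real.sqrt (μ Set.univ).toReal * ρ :=
  statement7_general μ m Dloc hDloc Dkloc ρ hρ hH yk hmem hval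
end

section
/- Let Z be a real normed space and let D_k, E_k ⊆ Z (k ∈ ℕ) and A, B ⊆ Z be subsets such that property (DC1) holds for A × B with respect to (D_k × E_k): for each (y, z) ∈ A × B there is a sequence (ỹ_k, z̃_k) with (ỹ_k, z̃_k) ∈ D_k × E_k for each k and (y, z) = Δ-lim_{k→∞} (ỹ_k, z̃_k). Suppose there exists z ∈ A ∩ B, and suppose for each k ∈ ℕ the pair (y_k, z_k) ∈ D_k × E_k is a global minimizer of the functional (y, z) ↦ ‖y − z‖_Z² over D_k × E_k. Then ‖y_k − z_k‖_Z → 0 as k → ∞. -/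
open Filter Topology

theorem DataConvergesTo.tendsto_norm_sub_zero_of_eq {Z : Type*} [NormedAddCommGroup Z]
    [NormedSpace ℝ Z] {y z : ℕ → Z} {a : Z} (h : DataConvergesTo y z a a) :
    Tendsto (fun k => ‖y k - z k‖) atTop (𝓝 0) := by
  simpa only [sub_self, sub_zero] using h.2.2

theorem tendsto_norm_sub_zero_of_minimizers {Z : Type*} [NormedAddCommGroup Z]
    {Dk Ek : ℕ → Set Z} {yk zk ty tz : ℕ → Z}
    (hmin : ∀ k, ∀ y' ∈ Dk k, ∀ z' ∈ Ek k, ‖yk k - zk k‖ ^ 2 ≤ ‖y' - z'‖ ^ 2)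
    (hmem : ∀ k, ty k ∈ Dk k ∧ tz k ∈ Ek k)
    (hlim : Tendsto (fun k => ‖ty k - tz k‖) atTop (𝓝 0)) :
    Tendsto (fun k => ‖yk k - zk k‖) atTop (𝓝 0) := by
  refine squeeze_zero (fun k => norm_nonneg _) (fun k => ?_) hlim
  exact (pow_le_pow_iff_left₀ (norm_nonneg _) (norm_nonneg _) two_ne_zero).1
    (hmin k (ty k) (hmem k).1 (tz k) (hmem k).2)

/-- If (DC1) holds for `A × B` with respect to `D_k × E_k`, there is some
`z ∈ A ∩ B`, and `(y_k, z_k)` is a global minimizer of `(y, z) ↦ ‖y - z‖²` over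
`D_k × E_k` for every `k`, then `‖y_k - z_k‖ → 0`. -/
theorem statement8 {Z : Type*} [NormedAddCommGroup Z] [NormedSpace ℝ Z]
    (A B : Set Z) (Dk Ek : ℕ → Set Z)
    (hDC1 : DC1 A B Dk Ek)
    (z : Z) (hz : z ∈ A ∩ B)
    (yk zk : ℕ → Z)
    (hmin : ∀ k, yk k ∈ Dk k ∧ zk k ∈ Ek k ∧
      ∀ y' ∈ Dk k, ∀ z' ∈ Ek k, ‖yk k - zk k‖ ^ 2 ≤ ‖y' - z'‖ ^ 2) :
    Tendsto (fun k => ‖yk k - zk k‖) atTop (𝓝 0) := by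
  obtain ⟨ty, tz, hmem, hconv⟩ := hDC1 z hz.1 z hz.2
  exact tendsto_norm_sub_zero_of_minimizers (fun k => (hmin k).2.2) hmem
    hconv.tendsto_norm_sub_zero_of_eq
end

section
/- Define κ : ℝ² → ℝ² by κ(w) := (2·arctan(‖w‖² − 1) + π/2 + 2) · w, where ‖·‖ denotes the Euclidean norm on ℝ². Then κ is strongly monotone and globally Lipschitz continuous: there exist constants m > 0 and L > 0 such that ⟨κ(v) − κ(w), v − w⟩ ≥ m‖v − w‖² and ‖κ(v) − κ(w)‖ ≤ L‖v − w‖ for all v, w ∈ ℝ². -/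
/-- The nonlinear material law `κ(w) = (2 arctan(‖w‖² - 1) + π/2 + 2) w` on `ℝ²`. -/
noncomputable def kappa (w : EuclideanSpace ℝ (Fin 2)) : EuclideanSpace ℝ (Fin 2) :=
  (2 * Real.arctan (‖w‖ ^ 2 - 1) + Real.pi / 2 + 2) • w

/-!
Write `κ(w) = a(‖w‖) w` with `a(t) = 2 arctan(t² - 1) + π/2 + 2`. For any radial map `w ↦ a(‖w‖) w`,
`⟪a(‖v‖) v - a(‖w‖) w, v - w⟫ = (a(‖v‖) + a(‖w‖))/2 ‖v - w‖² + (a(‖v‖) - a(‖w‖))/2 (‖v‖² - ‖w‖²)`,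
so it is strongly monotone with constant `inf a = 2 - π/2 > 0` because `a` is nondecreasing on
`[0, ∞)`. Splitting `a(‖v‖) v - a(‖w‖) w = a(‖v‖)(v - w) + (a(‖v‖) - a(‖w‖)) w` with `‖w‖ ≤ ‖v‖`
shows it is Lipschitz as soon as `a` is bounded and `t |a'(t)|` is bounded, which holds here since
`t a'(t) = 4t² / (1 + (t² - 1)²) ≤ 6`.
-/

open Real Set

lemma mul_abs_sub_le_of_mul_abs_deriv_le {g g' : ℝ → ℝ} {K : ℝ}
    (hg : ∀ t, HasDerivAt g (g' t) t) (hK : ∀ t, 0 ≤ t → t * |g' t| ≤ K)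
    {r R : ℝ} (hr : 0 ≤ r) (hrR : r ≤ R) :
    r * |g R - g r| ≤ K * (R - r) := by
  rcases hrR.eq_or_lt with rfl | hlt
  · simp
  obtain ⟨c, ⟨hrc, -⟩, hc⟩ := exists_hasDerivAt_eq_slope g g' hlt
    (fun t _ => (hg t).continuousAt.continuousWithinAt) (fun t _ => hg t)
  have hmvt : g R - g r = g' c * (R - r) := by
    rw [hc, div_mul_cancel₀ _ (sub_pos.mpr hlt).ne']
  calc r * |g R - g r| = r * |g' c| * (R - r) := by
        rw [hmvt, abs_mul, abs_of_pos (sub_pos.mpr hlt), mul_assoc]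
    _ ≤ c * |g' c| * (R - r) := by gcongr
    _ ≤ K * (R - r) := by gcongr; exact hK c (hr.trans hrc.le)

section Radial

variable {E : Type*}

lemma norm_smul_sub_smul_le_of_bounded [NormedAddCommGroup E] [NormedSpace ℝ E]
    {g : ℝ → ℝ} {M K : ℝ} (hM : ∀ t, 0 ≤ t → |g t| ≤ M)
    (hK : ∀ r R, 0 ≤ r → r ≤ R → r * |g R - g r| ≤ K * (R - r)) (v w : E) :
    ‖g ‖v‖ • v - g ‖w‖ • w‖ ≤ (M + K) * ‖v - w‖ := by
  wlog hwv : ‖w‖ ≤ ‖v‖ generalizing v w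
  · rw [norm_sub_rev, norm_sub_rev v]
    exact this w v (le_of_not_ge hwv)
  have hsplit : g ‖v‖ • v - g ‖w‖ • w = g ‖v‖ • (v - w) + (g ‖v‖ - g ‖w‖) • w := by
    rw [smul_sub, sub_smul]; abel
  calc ‖g ‖v‖ • v - g ‖w‖ • w‖
      ≤ |g ‖v‖| * ‖v - w‖ + ‖w‖ * |g ‖v‖ - g ‖w‖| := by
        rw [hsplit, mul_comm ‖w‖]
        refine (norm_add_le _ _).trans_eq ?_
        rw [norm_smul, norm_smul, Real.norm_eq_abs, Real.norm_eq_abs]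
    _ ≤ M * ‖v - w‖ + K * (‖v‖ - ‖w‖) :=
        add_le_add (mul_le_mul_of_nonneg_right (hM _ (norm_nonneg v)) (norm_nonneg _))
          (hK _ _ (norm_nonneg w) hwv)
    _ ≤ (M + K) * ‖v - w‖ := by
        have hK0 : 0 ≤ K := by simpa using hK 0 1 le_rfl zero_le_one
        nlinarith [norm_sub_norm_le v w, norm_nonneg (v - w)]

lemma inner_smul_sub_smul_sub [NormedAddCommGroup E] [InnerProductSpace ℝ E]
    (a b : ℝ) (v w : E) :
    inner ℝ (a • v - b • w) (v - w) =
      (a + b) / 2 * ‖v - w‖ ^ 2 + (a - b) / 2 * (‖v‖ ^ 2 - ‖w‖ ^ 2) := by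
  simp only [norm_sub_sq_real, inner_sub_left, inner_sub_right, real_inner_smul_left,
    real_inner_self_eq_norm_sq, real_inner_comm w v]
  ring

lemma MonotoneOn.mul_sq_sub_sq_nonneg {g : ℝ → ℝ} (hg : MonotoneOn g (Ici 0))
    {a b : ℝ} (ha : 0 ≤ a) (hb : 0 ≤ b) :
    0 ≤ (g a - g b) * (a ^ 2 - b ^ 2) := by
  rcases le_total b a with hba | hab
  · exact mul_nonneg (sub_nonneg.mpr (hg hb ha hba)) (by nlinarith)
  · exact mul_nonneg_of_nonpos_of_nonpos (sub_nonpos.mpr (hg ha hb hab)) (by nlinarith)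

lemma mul_norm_sub_sq_le_inner_smul_sub_smul [NormedAddCommGroup E] [InnerProductSpace ℝ E]
    {g : ℝ → ℝ} {m : ℝ} (hg : MonotoneOn g (Ici 0)) (hm : ∀ t, 0 ≤ t → m ≤ g t) (v w : E) :
    m * ‖v - w‖ ^ 2 ≤ inner ℝ (g ‖v‖ • v - g ‖w‖ • w) (v - w) := by
  rw [inner_smul_sub_smul_sub]
  have hcross := hg.mul_sq_sub_sq_nonneg (norm_nonneg v) (norm_nonneg w)
  have hv := hm _ (norm_nonneg v)
  have hw := hm _ (norm_nonneg w)
  nlinarith [sq_nonneg ‖v - w‖]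

end Radial

noncomputable def kappaCoeff (t : ℝ) : ℝ := 2 * arctan (t ^ 2 - 1) + π / 2 + 2

lemma kappa_eq_kappaCoeff_smul (w : EuclideanSpace ℝ (Fin 2)) : kappa w = kappaCoeff ‖w‖ • w :=
  rfl

lemma two_sub_pi_div_two_lt_kappaCoeff (t : ℝ) : 2 - π / 2 < kappaCoeff t := by
  have := neg_pi_div_two_lt_arctan (t ^ 2 - 1)
  unfold kappaCoeff; linarith

lemma abs_kappaCoeff_le (t : ℝ) : |kappaCoeff t| ≤ 2 + 3 * π / 2 := by
  have hlb := two_sub_pi_div_two_lt_kappaCoeff t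
  have hub := arctan_lt_pi_div_two (t ^ 2 - 1)
  rw [abs_of_pos (by linarith [pi_lt_four])]
  unfold kappaCoeff; linarith

lemma kappaCoeff_monotoneOn : MonotoneOn kappaCoeff (Ici 0) := by
  intro s hs t _ hst
  have : arctan (s ^ 2 - 1) ≤ arctan (t ^ 2 - 1) :=
    arctan_strictMono.monotone (by nlinarith [mem_Ici.mp hs])
  unfold kappaCoeff; linarith

lemma hasDerivAt_kappaCoeff (t : ℝ) :
    HasDerivAt kappaCoeff (4 * t / (1 + (t ^ 2 - 1) ^ 2)) t := by
  have hinner : HasDerivAt (fun t : ℝ => t ^ 2 - 1) (2 * t) t := by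
    simpa using (hasDerivAt_pow 2 t).sub_const 1
  rw [show 4 * t / (1 + (t ^ 2 - 1) ^ 2) = 2 * (1 / (1 + (t ^ 2 - 1) ^ 2) * (2 * t)) by ring]
  exact ((((hasDerivAt_arctan _).comp t hinner).const_mul 2).add_const (π / 2)).add_const 2

lemma mul_abs_deriv_kappaCoeff_le {t : ℝ} (ht : 0 ≤ t) :
    t * |4 * t / (1 + (t ^ 2 - 1) ^ 2)| ≤ 6 := by
  have hden : 0 < 1 + (t ^ 2 - 1) ^ 2 := by positivity
  rw [abs_of_nonneg (by positivity), ← mul_div_assoc, div_le_iff₀ hden]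
  nlinarith [sq_nonneg (t ^ 2 - 4 / 3)]

/-- `κ` is strongly monotone and globally Lipschitz continuous: there are
constants `m > 0` and `L > 0` with `⟪κ(v) - κ(w), v - w⟫ ≥ m ‖v - w‖²` and
`‖κ(v) - κ(w)‖ ≤ L ‖v - w‖` for all `v, w ∈ ℝ²`. -/
theorem statement10 :
    ∃ m L : ℝ, 0 < m ∧ 0 < L ∧
      ∀ v w : EuclideanSpace ℝ (Fin 2),
        m * ‖v - w‖ ^ 2 ≤ (inner ℝ (kappa v - kappa w) (v - w) : ℝ) ∧
        ‖kappa v - kappa w‖ ≤ L * ‖v - w‖ := by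
  refine ⟨2 - π / 2, 2 + 3 * π / 2 + 6, by linarith [pi_lt_four], by positivity,
    fun v w => ?_⟩
  simp only [kappa_eq_kappaCoeff_smul]
  exact ⟨mul_norm_sub_sq_le_inner_smul_sub_smul kappaCoeff_monotoneOn
      (fun t _ => (two_sub_pi_div_two_lt_kappaCoeff t).le) v w,
    norm_smul_sub_smul_le_of_bounded (fun t _ => abs_kappaCoeff_le t)
      (fun _ _ hr hrR => mul_abs_sub_le_of_mul_abs_deriv_le hasDerivAt_kappaCoeff
        (fun _ ht => mul_abs_deriv_kappaCoeff_le ht) hr hrR) v w⟩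
end
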